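/- arXiv:1608.03257 — 2 statements merged into one kernel-verified Lean document; each statement's English description precedes it below -/
import Mathlib

section
/- Let p ∈ (0,1], δ > 0, η > 0, and let D be a real random variable (the drift of a randomly selected parameter) such that with probability p, E[D | selected unstable] ≥ δ·τ, where τ > 0. Suppose the accepted change equals D·exp(−η·max{−D,0}) in expectation. Then E[D·exp(−η·max{−D,0})] ≥ p·δ·τ − (1−p)·(e·η)^{−1}. In particular, if τ > 2(1−p)/(e·η·p·δ), the expectation is at least p·δ·τ/2 > 0. -/
/-!
On the unstable event `A` the accepted increment dominates the drift, since the Metropolis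
factor only damps negative values; so it contributes at least `p δ τ`. Off `A` the increment is
bounded below pointwise by `-(e η)⁻¹`, because `x e^{η x}` for `x < 0` is `-(y e^{-y})/η` with
`y = -η x`, and `y e^{-y} ≤ e⁻¹`.
-/

open MeasureTheory Real

noncomputable def metropolisAccept (η x : ℝ) : ℝ := x * exp (-η * max (-x) 0)

lemma le_metropolisAccept {η : ℝ} (hη : 0 ≤ η) (x : ℝ) : x ≤ metropolisAccept η x := by
  unfold metropolisAccept
  rcases le_or_gt 0 x with hx | hx
  · simp [max_eq_right (neg_nonpos.mpr hx)]
  · have : exp (-η * max (-x) 0) ≤ 1 := exp_le_one_iff.mpr (by nlinarith [le_max_right (-x) 0])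
    nlinarith

lemma neg_inv_exp_one_mul_le_metropolisAccept {η : ℝ} (hη : 0 < η) (x : ℝ) :
    -(exp 1 * η)⁻¹ ≤ metropolisAccept η x := by
  unfold metropolisAccept
  rcases le_or_gt 0 x with hx | hx
  · rw [max_eq_right (neg_nonpos.mpr hx)]
    simp only [mul_zero, exp_zero, mul_one]
    linarith [show 0 < (exp 1 * η)⁻¹ by positivity]
  · rw [max_eq_left (by linarith)]
    calc -(exp 1 * η)⁻¹ = -exp (-1) / η := by rw [exp_neg]; field_simp
      _ ≤ -(-η * x * exp (-(-η * x))) / η := by gcongr; exact mul_exp_neg_le_exp_neg_one _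
      _ = x * exp (-η * -x) := by field_simp

lemma setIntegral_add_measureReal_compl_mul_le_integral {Ω : Type*} {m0 : MeasurableSpace Ω}
    {μ : Measure Ω} [IsFiniteMeasure μ] {f g : Ω → ℝ} {A : Set Ω} {c : ℝ}
    (hA : MeasurableSet A) (hf : Integrable f μ) (hg : Integrable g μ)
    (hfg : ∀ x ∈ A, f x ≤ g x) (hcg : ∀ x ∈ Aᶜ, c ≤ g x) :
    ∫ x in A, f x ∂μ + μ.real Aᶜ * c ≤ ∫ x, g x ∂μ := by
  rw [← integral_add_compl hA hg]
  apply add_le_add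
  · exact setIntegral_mono_on hf.integrableOn hg.integrableOn hA hfg
  · calc μ.real Aᶜ * c = ∫ _ in Aᶜ, c ∂μ := by simp [mul_comm]
      _ ≤ ∫ x in Aᶜ, g x ∂μ :=
        setIntegral_mono_on (integrableOn_const (measure_ne_top _ _)) hg.integrableOn hA.compl hcg

theorem metropolis_drift_lower_bound_general
    {Ω : Type*} {m0 : MeasurableSpace Ω} {μ : Measure Ω} [IsProbabilityMeasure μ]
    {D : Ω → ℝ} {A : Set Ω} {p δ η τ : ℝ}
    (hδ : 0 < δ) (hη : 0 < η)
    (hp0 : 0 < p)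
    (hA : MeasurableSet A) (hpA : (μ A).toReal = p)
    (hDint : Integrable D μ)
    (hGint : Integrable (fun ω => D ω * Real.exp (-η * max (-D ω) 0)) μ)
    (hmeanA : p * δ * τ ≤ ∫ ω in A, D ω ∂μ) :
    p * δ * τ - (1 - p) * (Real.exp 1 * η)⁻¹
        ≤ (∫ ω, D ω * Real.exp (-η * max (-D ω) 0) ∂μ) ∧
      (τ > 2 * (1 - p) / (Real.exp 1 * η * p * δ) →
        p * δ * τ / 2 ≤ ∫ ω, D ω * Real.exp (-η * max (-D ω) 0) ∂μ) := by
  have hcompl : μ.real Aᶜ = 1 - p := by rw [probReal_compl_eq_one_sub hA, ← hpA]; rfl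
  have hmain : p * δ * τ - (1 - p) * (exp 1 * η)⁻¹
      ≤ ∫ ω, D ω * exp (-η * max (-D ω) 0) ∂μ := by
    have := setIntegral_add_measureReal_compl_mul_le_integral hA hDint hGint
      (fun ω _ => le_metropolisAccept hη.le (D ω))
      (fun ω _ => neg_inv_exp_one_mul_le_metropolisAccept hη (D ω))
    rw [hcompl] at this
    linarith
  refine ⟨hmain, fun hτ => ?_⟩
  have hpenalty : (1 - p) * (exp 1 * η)⁻¹ < p * δ * τ / 2 := by
    rw [gt_iff_lt, div_lt_iff₀ (by positivity)] at hτ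
    rw [← div_eq_mul_inv, div_lt_iff₀ (by positivity)]
    linarith
  linarith

/-- Abstraction of Lemma (SubMg): if with probability `p` an unstable parameter
is selected, on which event the drift `D` has mean at least `δτ`, then the
Metropolis-accepted increment `D·exp(−η[−D]₊)` has expectation at least
`pδτ − (1−p)/(eη)`; in particular it is at least `pδτ/2 > 0` for `τ` large. -/
theorem metropolis_drift_lower_bound
    {Ω : Type*} {m0 : MeasurableSpace Ω} {μ : Measure Ω} [IsProbabilityMeasure μ]
    {D : Ω → ℝ} {A : Set Ω} {p δ η τ : ℝ}
    (hδ : 0 < δ) (hη : 0 < η) (hτ : 0 < τ)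
    (hp0 : 0 < p) (hp1 : p ≤ 1)
    (hA : MeasurableSet A) (hpA : (μ A).toReal = p)
    (hDint : Integrable D μ)
    (hGint : Integrable (fun ω => D ω * Real.exp (-η * max (-D ω) 0)) μ)
    (hmeanA : p * δ * τ ≤ ∫ ω in A, D ω ∂μ) :
    p * δ * τ - (1 - p) * (Real.exp 1 * η)⁻¹
        ≤ (∫ ω, D ω * Real.exp (-η * max (-D ω) 0) ∂μ) ∧
      (τ > 2 * (1 - p) / (Real.exp 1 * η * p * δ) →
        p * δ * τ / 2 ≤ ∫ ω, D ω * Real.exp (-η * max (-D ω) 0) ∂μ) :=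
  metropolis_drift_lower_bound_general (m0 := m0) hδ hη hp0 hA hpA hDint hGint hmeanA
end

section
/- Let (S_n)_{n≥0} be a process on [0,∞) with increments bounded by c > 0 such that whenever S_n > κ the conditional drift is at most −δ < 0 (i.e. E[S_{n+1} − S_n | F_n, S_n > κ] ≤ −δ, interpreted via a stopped supermartingale). Fix a level L > κ + c. Then the probability that within N steps the process, started from a value in (κ, κ + c], reaches a value ≥ L before returning to [0, κ], is at most exp(−(L − κ − c)²/(2c²N)), and by a union bound over at most N possible excursions, the probability that the running maximum over N steps of any excursion above κ exceeds L is at most N·exp(−(L − κ − c)²/(2c²N)). -/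
/-!
Every increment taken while the process is above `κ` has conditional mean `≤ -δ ≤ 0`, so the
increments of `S` from a time `s` on, stopped when `S` leaves `(κ, L)`, are bounded
supermartingale differences; by Azuma–Hoeffding their sum exceeds `L - κ - c` with probability at
most `exp (-(L - κ - c)² / (2 c² N))`. If `S` reaches `L` by time `N`, take its first such time
`n` and the last time `s < n` at which `S` entered `(κ, ∞)`: then `S s ≤ κ + c` (either `s = 0`
or `S (s - 1) ≤ κ`), `S` stays in `(κ, L)` on `[s, n)`, and the stopped sum from `s` telescopes
to `S n - S s ≥ L - κ - c`. A union bound over the `N` possible values of `s` gives the second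
bound; on paths that stay above `κ` until they reach `L`, `s = 0` and no union bound is needed.
-/

open MeasureTheory

open ProbabilityTheory Real Finset

lemma Real.exp_mul_le_cosh_add_sinh_mul_div {l c x : ℝ} (hc : 0 < c) (hx : |x| ≤ c) :
    exp (l * x) ≤ cosh (l * c) + sinh (l * c) * (x / c) := by
  obtain ⟨hx₁, hx₂⟩ := abs_le.mp hx
  have ha : 0 ≤ (c - x) / (2 * c) := div_nonneg (by linarith) (by positivity)
  have hb : 0 ≤ (c + x) / (2 * c) := div_nonneg (by linarith) (by positivity)
  have h := convexOn_exp.2 (Set.mem_univ (-(l * c))) (Set.mem_univ (l * c)) ha hb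
    (by field_simp; ring)
  have hpt : (c - x) / (2 * c) * -(l * c) + (c + x) / (2 * c) * (l * c) = l * x := by
    field_simp; ring
  simp only [smul_eq_mul, hpt] at h
  refine h.trans_eq ?_
  rw [cosh_eq, sinh_eq]
  field_simp
  ring

section Azuma

variable {Ω : Type*} {m0 : MeasurableSpace Ω} {μ : Measure Ω} [IsProbabilityMeasure μ]

lemma integral_mul_nonpos_of_condExp_nonpos {m : MeasurableSpace Ω} (hm : m ≤ m0) {F ξ : Ω → ℝ}
    (hF : StronglyMeasurable[m] F) (hF₀ : 0 ≤ F) (hFξ : Integrable (F * ξ) μ)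
    (hξ : Integrable ξ μ) (hce : μ[ξ | m] ≤ᵐ[μ] 0) :
    ∫ ω, F ω * ξ ω ∂μ ≤ 0 :=
  calc ∫ ω, F ω * ξ ω ∂μ = ∫ ω, (μ[F * ξ | m]) ω ∂μ := (integral_condExp hm).symm
    _ = ∫ ω, (F * μ[ξ | m]) ω ∂μ :=
      integral_congr_ae (condExp_mul_of_stronglyMeasurable_left hF hFξ hξ)
    _ ≤ 0 := integral_nonpos_of_ae <| by
      filter_upwards [hce] with ω hω
      exact mul_nonpos_of_nonneg_of_nonpos (hF₀ ω) hω

lemma integral_mul_exp_mul_le {m : MeasurableSpace Ω} (hm : m ≤ m0) {F ξ : Ω → ℝ} {c l : ℝ}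
    (hc : 0 < c) (hl : 0 ≤ l) (hF : StronglyMeasurable[m] F) (hF₀ : 0 ≤ F)
    (hFint : Integrable F μ) (hξ : AEStronglyMeasurable[m0] ξ μ) (hbd : ∀ᵐ ω ∂μ, |ξ ω| ≤ c)
    (hce : μ[ξ | m] ≤ᵐ[μ] 0) :
    ∫ ω, F ω * exp (l * ξ ω) ∂μ ≤ exp (c ^ 2 * l ^ 2 / 2) * ∫ ω, F ω ∂μ := by
  have hξint : Integrable ξ μ := .of_bound hξ c (by simpa only [Real.norm_eq_abs] using hbd)
  have hFξ : Integrable (fun ω => F ω * ξ ω) μ :=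
    hFint.mul_bdd hξ (by simpa only [Real.norm_eq_abs] using hbd)
  have hFexp : Integrable (fun ω => F ω * exp (l * ξ ω)) μ := by
    refine hFint.mul_bdd (c := exp (l * c)) ?_ ?_
    · exact (measurable_exp.comp_aemeasurable (hξ.aemeasurable.const_mul l)).aestronglyMeasurable
    · filter_upwards [hbd] with ω hω
      rw [Real.norm_eq_abs, abs_of_pos (exp_pos _), exp_le_exp]
      exact mul_le_mul_of_nonneg_left (abs_le.mp hω).2 hl
  have hchord : ∫ ω, F ω * exp (l * ξ ω) ∂μ
      ≤ ∫ ω, (cosh (l * c) * F ω + sinh (l * c) / c * (F ω * ξ ω)) ∂μ := by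
    refine integral_mono_ae hFexp ((hFint.const_mul _).add (hFξ.const_mul _)) ?_
    filter_upwards [hbd] with ω hω
    calc F ω * exp (l * ξ ω) ≤ F ω * (cosh (l * c) + sinh (l * c) * (ξ ω / c)) :=
          mul_le_mul_of_nonneg_left (exp_mul_le_cosh_add_sinh_mul_div hc hω) (hF₀ ω)
      _ = cosh (l * c) * F ω + sinh (l * c) / c * (F ω * ξ ω) := by ring
  have hmean : ∫ ω, F ω * ξ ω ∂μ ≤ 0 :=
    integral_mul_nonpos_of_condExp_nonpos hm hF hF₀ hFξ hξint hce
  have hsinh : 0 ≤ sinh (l * c) / c := div_nonneg (sinh_nonneg_iff.mpr (by positivity)) hc.le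
  have hcosh : cosh (l * c) ≤ exp (c ^ 2 * l ^ 2 / 2) := by
    simpa only [mul_pow, mul_comm] using cosh_le_exp_half_sq (l * c)
  rw [integral_add (hFint.const_mul _) (hFξ.const_mul _), integral_const_mul,
    integral_const_mul] at hchord
  have hFpos : 0 ≤ ∫ ω, F ω ∂μ := integral_nonneg hF₀
  nlinarith [mul_nonpos_of_nonneg_of_nonpos hsinh hmean, mul_le_mul_of_nonneg_right hcosh hFpos]

variable {𝒢 : Filtration ℕ m0} {ξ : ℕ → Ω → ℝ} {c : ℝ}

lemma stronglyMeasurable_sum_range (hξ : ∀ k, StronglyMeasurable[𝒢 (k + 1)] (ξ k)) (n : ℕ) :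
    StronglyMeasurable[𝒢 n] (fun ω => ∑ k ∈ range n, ξ k ω) :=
  Finset.stronglyMeasurable_fun_sum _ fun k hk => (hξ k).mono (𝒢.mono (mem_range.mp hk))

lemma integrable_exp_mul_sum_range (hξ : ∀ k, StronglyMeasurable[𝒢 (k + 1)] (ξ k))
    (hbd : ∀ k, ∀ᵐ ω ∂μ, |ξ k ω| ≤ c) (l : ℝ) (n : ℕ) :
    Integrable (fun ω => exp (l * ∑ k ∈ range n, ξ k ω)) μ := by
  refine integrable_exp_mul_of_mem_Icc (a := -(n * c)) (b := n * c)
    ((stronglyMeasurable_sum_range hξ n).mono (𝒢.le n)).measurable.aemeasurable ?_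
  filter_upwards [ae_all_iff.2 hbd] with ω hω
  have : |∑ k ∈ range n, ξ k ω| ≤ n * c :=
    (abs_sum_le_sum_abs _ _).trans
      (by simpa using sum_le_sum fun k (_ : k ∈ range n) => hω k)
  exact abs_le.mp this

lemma mgf_sum_le_of_condExp_nonpos (hc : 0 < c) (hξ : ∀ k, StronglyMeasurable[𝒢 (k + 1)] (ξ k))
    (hbd : ∀ k, ∀ᵐ ω ∂μ, |ξ k ω| ≤ c) (hce : ∀ k, μ[ξ k | 𝒢 k] ≤ᵐ[μ] 0) {l : ℝ} (hl : 0 ≤ l)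
    (n : ℕ) : mgf (fun ω => ∑ k ∈ range n, ξ k ω) μ l ≤ exp (n * c ^ 2 * l ^ 2 / 2) := by
  induction n with
  | zero => simp [mgf]
  | succ n ih =>
    have hstep := integral_mul_exp_mul_le (𝒢.le n) hc hl
      (continuous_exp.comp_stronglyMeasurable ((stronglyMeasurable_sum_range hξ n).const_mul l))
      (fun ω => (exp_pos _).le) (integrable_exp_mul_sum_range hξ hbd l n)
      ((hξ n).mono (𝒢.le (n + 1))).aestronglyMeasurable (hbd n) (hce n)
    calc mgf (fun ω => ∑ k ∈ range (n + 1), ξ k ω) μ l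
        = ∫ ω, exp (l * ∑ k ∈ range n, ξ k ω) * exp (l * ξ n ω) ∂μ := by
          simp only [mgf, sum_range_succ, mul_add, exp_add]
      _ ≤ exp (c ^ 2 * l ^ 2 / 2) * mgf (fun ω => ∑ k ∈ range n, ξ k ω) μ l := hstep
      _ ≤ exp (c ^ 2 * l ^ 2 / 2) * exp (n * c ^ 2 * l ^ 2 / 2) := by gcongr
      _ = exp ((n + 1 : ℕ) * c ^ 2 * l ^ 2 / 2) := by rw [← exp_add]; push_cast; ring_nf

/-- **Azuma–Hoeffding inequality** for a supermartingale with increments bounded by `c`. -/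
theorem measure_le_sum_le_of_condExp_nonpos (hc : 0 < c)
    (hξ : ∀ k, StronglyMeasurable[𝒢 (k + 1)] (ξ k)) (hbd : ∀ k, ∀ᵐ ω ∂μ, |ξ k ω| ≤ c)
    (hce : ∀ k, μ[ξ k | 𝒢 k] ≤ᵐ[μ] 0) {t : ℝ} (ht : 0 ≤ t) (N : ℕ) :
    μ {ω | t ≤ ∑ k ∈ range N, ξ k ω} ≤ ENNReal.ofReal (exp (-t ^ 2 / (2 * c ^ 2 * N))) := by
  rw [← ofReal_measureReal]
  refine ENNReal.ofReal_le_ofReal ?_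
  -- Chernoff with the optimal parameter `l = t / (c² N)`, which Lean makes `0` when `N = 0`
  set l := t / (c ^ 2 * N)
  have hl : 0 ≤ l := by positivity
  calc μ.real {ω | t ≤ ∑ k ∈ range N, ξ k ω}
      ≤ exp (-l * t) * mgf (fun ω => ∑ k ∈ range N, ξ k ω) μ l :=
        measure_ge_le_exp_mul_mgf t hl (integrable_exp_mul_sum_range hξ hbd l N)
    _ ≤ exp (-l * t) * exp (N * c ^ 2 * l ^ 2 / 2) := by
        gcongr; exact mgf_sum_le_of_condExp_nonpos hc hξ hbd hce hl N
    _ = exp (-t ^ 2 / (2 * c ^ 2 * N)) := by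
        rw [← exp_add]
        congr 1
        rcases N.eq_zero_or_pos with rfl | hN
        · simp [l]
        · simp only [l]; field_simp; ring

end Azuma

lemma exists_first_le {x : ℕ → ℝ} {L : ℝ} {n₀ : ℕ} (h : L ≤ x n₀) :
    ∃ n ≤ n₀, L ≤ x n ∧ ∀ j < n, x j < L := by
  classical
  have hex : ∃ n, L ≤ x n := ⟨n₀, h⟩
  exact ⟨Nat.find hex, Nat.find_min' hex h, Nat.find_spec hex,
    fun j hj => not_le.mp (Nat.find_min hex hj)⟩

lemma exists_excursion_start {x : ℕ → ℝ} {a c : ℝ} (h0 : x 0 ≤ a + c)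
    (hstep : ∀ k, x (k + 1) ≤ x k + c) (n : ℕ) :
    ∃ s ≤ n, x s ≤ a + c ∧ ∀ j ∈ Ico s n, a < x j := by
  classical
  have hex : ∃ s, ∀ j ∈ Ico s n, a < x j := ⟨n, by simp⟩
  refine ⟨Nat.find hex, Nat.find_min' hex (by simp), ?_, Nat.find_spec hex⟩
  cases hs : Nat.find hex with
  | zero => exact h0
  | succ s =>
    have hfail := Nat.find_min hex (show s < Nat.find hex by omega)
    push Not at hfail
    obtain ⟨j, hj, hxj⟩ := hfail
    obtain rfl : j = s := by
      by_contra hne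
      have := Nat.find_spec hex j (by rw [mem_Ico] at hj ⊢; omega)
      linarith
    linarith [hstep j]

section Excursion

variable {Ω : Type*} {m0 : MeasurableSpace Ω} {μ : Measure Ω} {𝒢 : Filtration ℕ m0}
  {S : ℕ → Ω → ℝ} {κ L c : ℝ}

def excursionSet (S : ℕ → Ω → ℝ) (κ L : ℝ) (s k : ℕ) : Set Ω :=
  {ω | s ≤ k ∧ ∀ j ∈ Icc s k, S j ω ∈ Set.Ioo κ L}

noncomputable def excursionIncrement (S : ℕ → Ω → ℝ) (κ L : ℝ) (s k : ℕ) : Ω → ℝ :=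
  (excursionSet S κ L s k).indicator fun ω => S (k + 1) ω - S k ω

lemma measurableSet_excursionSet (hadp : Adapted 𝒢 S) (s k : ℕ) :
    MeasurableSet[𝒢 k] (excursionSet S κ L s k) := by
  have : excursionSet S κ L s k = {_ω | s ≤ k} ∩ ⋂ j ∈ Icc s k, S j ⁻¹' Set.Ioo κ L := by
    ext; simp [excursionSet]
  rw [this]
  exact (MeasurableSet.const _).inter (Finset.measurableSet_biInter _ fun j hj =>
    hadp.measurable_le (mem_Icc.mp hj).2 measurableSet_Ioo)

lemma excursionSet_subset_setOf_lt (s k : ℕ) : excursionSet S κ L s k ⊆ {ω | κ < S k ω} :=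
  fun _ ⟨hsk, hstay⟩ => (hstay k (mem_Icc.mpr ⟨hsk, le_rfl⟩)).1

lemma stronglyMeasurable_excursionIncrement (hadp : Adapted 𝒢 S) (s k : ℕ) :
    StronglyMeasurable[𝒢 (k + 1)] (excursionIncrement S κ L s k) :=
  ((hadp (k + 1)).sub (hadp.measurable_le k.le_succ)).stronglyMeasurable.indicator
    (𝒢.mono k.le_succ _ (measurableSet_excursionSet hadp s k))

lemma abs_excursionIncrement_le (hinc : ∀ k, ∀ᵐ ω ∂μ, |S (k + 1) ω - S k ω| ≤ c) (s k : ℕ) :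
    ∀ᵐ ω ∂μ, |excursionIncrement S κ L s k ω| ≤ c := by
  filter_upwards [hinc k] with ω hω
  by_cases hmem : ω ∈ excursionSet S κ L s k
  · simpa [excursionIncrement, hmem] using hω
  · simpa [excursionIncrement, hmem] using (abs_nonneg _).trans hω

lemma condExp_excursionIncrement_nonpos [IsProbabilityMeasure μ] (hadp : Adapted 𝒢 S)
    (hinc : ∀ k, ∀ᵐ ω ∂μ, |S (k + 1) ω - S k ω| ≤ c)
    (hdrift : ∀ k, ∀ᵐ ω ∂μ, κ < S k ω → (μ[fun ω' => S (k + 1) ω' - S k ω' | 𝒢 k]) ω ≤ 0)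
    (s k : ℕ) : μ[excursionIncrement S κ L s k | 𝒢 k] ≤ᵐ[μ] 0 := by
  have hint : Integrable (fun ω => S (k + 1) ω - S k ω) μ :=
    .of_bound ((hadp.measurable.sub hadp.measurable).aestronglyMeasurable) c
      (by simpa only [Real.norm_eq_abs] using hinc k)
  unfold excursionIncrement
  filter_upwards [condExp_indicator hint (measurableSet_excursionSet hadp s k), hdrift k]
    with ω hω hdω
  rw [hω]
  by_cases hmem : ω ∈ excursionSet S κ L s k
  · simpa [hmem] using hdω (excursionSet_subset_setOf_lt s k hmem)
  · simp [hmem]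

lemma measure_le_sum_excursionIncrement_le [IsProbabilityMeasure μ] (hc : 0 < c)
    (hadp : Adapted 𝒢 S)
    (hinc : ∀ k, ∀ᵐ ω ∂μ, |S (k + 1) ω - S k ω| ≤ c)
    (hdrift : ∀ k, ∀ᵐ ω ∂μ, κ < S k ω → (μ[fun ω' => S (k + 1) ω' - S k ω' | 𝒢 k]) ω ≤ 0)
    {t : ℝ} (ht : 0 ≤ t) (s N : ℕ) :
    μ {ω | t ≤ ∑ k ∈ range N, excursionIncrement S κ L s k ω}
      ≤ ENNReal.ofReal (exp (-t ^ 2 / (2 * c ^ 2 * N))) :=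
  measure_le_sum_le_of_condExp_nonpos hc (stronglyMeasurable_excursionIncrement hadp s)
    (abs_excursionIncrement_le hinc s) (condExp_excursionIncrement_nonpos hadp hinc hdrift s) ht N

lemma sum_excursionIncrement_eq {ω : Ω} {s n N : ℕ} (hsn : s ≤ n) (hnN : n ≤ N)
    (hstay : ∀ j ∈ Ico s n, S j ω ∈ Set.Ioo κ L) (hexit : S n ω ∉ Set.Ioo κ L) :
    ∑ k ∈ range N, excursionIncrement S κ L s k ω = S n ω - S s ω := by
  have hmem : ∀ k, ω ∈ excursionSet S κ L s k ↔ k ∈ Ico s n := by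
    intro k
    simp only [excursionSet, Set.mem_ofPred_eq, mem_Ico, mem_Icc]
    constructor
    · rintro ⟨hsk, hall⟩
      exact ⟨hsk, not_le.mp fun hnk => hexit (hall n ⟨hsn, hnk⟩)⟩
    · rintro ⟨hsk, hkn⟩
      exact ⟨hsk, fun j hj => hstay j (mem_Ico.mpr ⟨hj.1, by omega⟩)⟩
  have hind : ∀ k, excursionIncrement S κ L s k ω
      = (↑(Ico s n) : Set ℕ).indicator (fun k => S (k + 1) ω - S k ω) k := by
    intro k
    by_cases hk : k ∈ Ico s n
    · rw [excursionIncrement, Set.indicator_of_mem ((hmem k).mpr hk),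
        Set.indicator_of_mem (mem_coe.mpr hk)]
    · rw [excursionIncrement, Set.indicator_of_notMem (mt (hmem k).mp hk),
        Set.indicator_of_notMem (mt mem_coe.mp hk)]
  rw [sum_congr rfl fun k _ => hind k,
    sum_indicator_subset _ (fun k hk => mem_range.mpr ((mem_Ico.mp hk).2.trans_le hnN)),
    sum_Ico_sub (f := fun i => S i ω) hsn]

lemma le_sum_excursionIncrement {ω : Ω} {s n N : ℕ} (hsn : s ≤ n) (hnN : n ≤ N)
    (hstay : ∀ j ∈ Ico s n, S j ω ∈ Set.Ioo κ L) (hn : L ≤ S n ω) (hs : S s ω ≤ κ + c) :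
    L - κ - c ≤ ∑ k ∈ range N, excursionIncrement S κ L s k ω := by
  rw [sum_excursionIncrement_eq hsn hnN hstay fun h => h.2.not_ge hn]
  linarith

lemma le_sum_excursionIncrement_zero {ω : Ω} {N : ℕ} (h0 : S 0 ω ≤ κ + c)
    (hhit : ∃ n ≤ N, L ≤ S n ω ∧ ∀ m ≤ n, κ < S m ω) :
    L - κ - c ≤ ∑ k ∈ range N, excursionIncrement S κ L 0 k ω := by
  obtain ⟨n₀, hn₀N, hn₀, habove⟩ := hhit
  obtain ⟨n, hnn₀, hn, hbelow⟩ := exists_first_le (x := fun j => S j ω) hn₀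
  exact le_sum_excursionIncrement n.zero_le (hnn₀.trans hn₀N)
    (fun j hj => ⟨habove j ((mem_Ico.mp hj).2.trans_le hnn₀).le, hbelow j (mem_Ico.mp hj).2⟩) hn h0

lemma exists_le_sum_excursionIncrement {ω : Ω} {N : ℕ} (hL : κ + c < L)
    (h0 : S 0 ω ≤ κ + c) (hinc : ∀ k, |S (k + 1) ω - S k ω| ≤ c)
    (hhit : ∃ n ≤ N, L ≤ S n ω) :
    ∃ s < N, L - κ - c ≤ ∑ k ∈ range N, excursionIncrement S κ L s k ω := by
  obtain ⟨n₀, hn₀N, hn₀⟩ := hhit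
  obtain ⟨n, hnn₀, hn, hbelow⟩ := exists_first_le (x := fun j => S j ω) hn₀
  obtain ⟨s, hsn, hs, habove⟩ := exists_excursion_start (x := fun j => S j ω) h0
    (fun k => by linarith [(abs_le.mp (hinc k)).2]) n
  have hsn' : s < n := lt_of_le_of_ne hsn (by rintro rfl; linarith)
  exact ⟨s, by omega, le_sum_excursionIncrement hsn (hnn₀.trans hn₀N)
    (fun j hj => ⟨habove j hj, hbelow j (mem_Ico.mp hj).2⟩) hn hs⟩

end Excursion

theorem excursion_tail_bound_general
    {Ω : Type*} {m0 : MeasurableSpace Ω} {μ : Measure Ω} [IsProbabilityMeasure μ]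
    {𝒢 : Filtration ℕ m0} {S : ℕ → Ω → ℝ} {c δ κ L : ℝ} {N : ℕ}
    (hc : 0 < c) (hδ : 0 < δ) (hL : κ + c < L)
    (hadp : Adapted 𝒢 S)
    (hinc : ∀ n, ∀ᵐ ω ∂μ, |S (n + 1) ω - S n ω| ≤ c)
    (hdrift : ∀ n, ∀ᵐ ω ∂μ, κ < S n ω →
      (μ[fun ω' => S (n + 1) ω' - S n ω' | 𝒢 n]) ω ≤ -δ)
    (h0 : ∀ᵐ ω ∂μ, S 0 ω ∈ Set.Ioc κ (κ + c)) :
    μ {ω | ∃ n ≤ N, L ≤ S n ω ∧ ∀ m ≤ n, κ < S m ω}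
        ≤ ENNReal.ofReal (Real.exp (-(L - κ - c) ^ 2 / (2 * c ^ 2 * N))) ∧
      μ {ω | ∃ n ≤ N, L ≤ S n ω}
        ≤ N * ENNReal.ofReal (Real.exp (-(L - κ - c) ^ 2 / (2 * c ^ 2 * N))) := by
  have hsuper : ∀ n, ∀ᵐ ω ∂μ, κ < S n ω →
      (μ[fun ω' => S (n + 1) ω' - S n ω' | 𝒢 n]) ω ≤ 0 := fun n => by
    filter_upwards [hdrift n] with ω hω hκ using (hω hκ).trans (neg_nonpos.mpr hδ.le)
  have hazuma (s : ℕ) := measure_le_sum_excursionIncrement_le (L := L) hc hadp hinc hsuper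
    (show 0 ≤ L - κ - c by linarith) s N
  constructor
  · refine (measure_mono_ae ?_).trans (hazuma 0)
    filter_upwards [h0] with ω hω hhit using le_sum_excursionIncrement_zero hω.2 hhit
  · have hcover : {ω | ∃ n ≤ N, L ≤ S n ω} ≤ᵐ[μ]
        ⋃ s ∈ range N, {ω | L - κ - c ≤ ∑ k ∈ range N, excursionIncrement S κ L s k ω} := by
      filter_upwards [h0, ae_all_iff.2 hinc] with ω hω hincω hhit
      obtain ⟨s, hs, hsum⟩ := exists_le_sum_excursionIncrement hL hω.2 hincω hhit
      exact Set.mem_biUnion (mem_range.mpr hs) hsum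
    calc μ {ω | ∃ n ≤ N, L ≤ S n ω}
        ≤ ∑ s ∈ range N,
            μ {ω | L - κ - c ≤ ∑ k ∈ range N, excursionIncrement S κ L s k ω} :=
          (measure_mono_ae hcover).trans (measure_biUnion_finset_le _ _)
      _ ≤ N * ENNReal.ofReal (Real.exp (-(L - κ - c) ^ 2 / (2 * c ^ 2 * N))) := by
          simpa using sum_le_sum fun s (_ : s ∈ range N) => hazuma s

/-- Excursion argument of the second half of Lemma 1 (hoefd): a nonnegative
process with increments bounded by `c` and drift at most `−δ` above level `κ`,
started just above `κ`, reaches level `L` within `N` steps before returning to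
`[0, κ]` with probability at most `exp(−(L−κ−c)²/(2c²N))`; by a union bound
over at most `N` excursions, it exceeds `L` at all within `N` steps with
probability at most `N·exp(−(L−κ−c)²/(2c²N))`. -/
theorem excursion_tail_bound
    {Ω : Type*} {m0 : MeasurableSpace Ω} {μ : Measure Ω} [IsProbabilityMeasure μ]
    {𝒢 : Filtration ℕ m0} {S : ℕ → Ω → ℝ} {c δ κ L : ℝ} {N : ℕ}
    (hc : 0 < c) (hδ : 0 < δ) (hκ : 0 < κ) (hL : κ + c < L) (hN : 1 ≤ N)
    (hadp : Adapted 𝒢 S)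
    (hint : ∀ n, Integrable (S n) μ)
    (hnonneg : ∀ n, ∀ᵐ ω ∂μ, 0 ≤ S n ω)
    (hinc : ∀ n, ∀ᵐ ω ∂μ, |S (n + 1) ω - S n ω| ≤ c)
    (hdrift : ∀ n, ∀ᵐ ω ∂μ, κ < S n ω →
      (μ[fun ω' => S (n + 1) ω' - S n ω' | 𝒢 n]) ω ≤ -δ)
    (h0 : ∀ᵐ ω ∂μ, S 0 ω ∈ Set.Ioc κ (κ + c)) :
    μ {ω | ∃ n ≤ N, L ≤ S n ω ∧ ∀ m ≤ n, κ < S m ω}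
        ≤ ENNReal.ofReal (Real.exp (-(L - κ - c) ^ 2 / (2 * c ^ 2 * N))) ∧
      μ {ω | ∃ n ≤ N, L ≤ S n ω}
        ≤ N * ENNReal.ofReal (Real.exp (-(L - κ - c) ^ 2 / (2 * c ^ 2 * N))) :=
  excursion_tail_bound_general hc hδ hL hadp hinc hdrift h0
end
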